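/- arXiv:1608.02458 — 3 statements merged into one kernel-verified Lean document; each statement's English description precedes it below -/
import Mathlib

section
/- Let μ be a uniformly locally bounded signed Borel measure on ℝ. Then |μ| is form bounded with respect to the negative Laplacian with relative bound zero: for every c with 0 < c < 1 there exists γ ≥ 0 such that for all u in the Sobolev space W¹₂(ℝ) one has ∫_ℝ |u|² d|μ| ≤ c ‖u'‖²_{L²(ℝ)} + γ ‖u‖²_{L²(ℝ)}. In fact, for every δ ∈ (0,1) one has ∫_ℝ |u|² d|μ| ≤ 4δ‖μ‖_loc ‖u'‖²_{L²} + (4‖μ‖_loc/δ) ‖u‖²_{L²}. -/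
open MeasureTheory Filter Set Real
open scoped ENNReal

/-- A locally finite signed Borel measure on `ℝ`, represented as a formal
difference `pos - neg` of two nonnegative Borel measures. -/
structure SM where
  pos : Measure ℝ
  neg : Measure ℝ

/-- Local finiteness of both parts (i.e. the signed measure has locally finite
total variation). -/
def SM.LocFin (μ : SM) : Prop :=
  IsLocallyFiniteMeasure μ.pos ∧ IsLocallyFiniteMeasure μ.neg

/-- The total variation `|a - b|` of the formal difference of two measures,
using the lattice-theoretic subtraction of measures (Jordan decomposition). -/
noncomputable def tvSub (a b : Measure ℝ) : Measure ℝ := (a - b) + (b - a)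

/-- The total variation measure `|μ|` of a signed measure. -/
noncomputable def SM.tv (μ : SM) : Measure ℝ := tvSub μ.pos μ.neg

/-- The total variation `|μ₁ - μ₂|` of the difference of two signed measures. -/
noncomputable def tvDiff (μ₁ μ₂ : SM) : Measure ℝ :=
  tvSub (μ₁.pos + μ₂.neg) (μ₂.pos + μ₁.neg)

/-- `‖ν‖_loc = sup_x ν([x, x+1])`. -/
noncomputable def normLoc (ν : Measure ℝ) : ℝ≥0∞ := ⨆ x : ℝ, ν (Set.Icc x (x + 1))

/-- A measure is uniformly locally bounded if `sup_x ν([x,x+1]) < ∞`. -/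
def UnifLocBounded (ν : Measure ℝ) : Prop := normLoc ν < ⊤

/-- `μ` is `p`-periodic: `μ(· + p) = μ`. -/
def SM.IsPeriodic (μ : SM) (p : ℝ) : Prop :=
  Measure.map (fun x => x + p) μ.pos = μ.pos ∧ Measure.map (fun x => x + p) μ.neg = μ.neg

/-- `I_x = [min(x,0), max(x,0)]`. -/
def Ix (x : ℝ) : Set ℝ := Set.Icc (min x 0) (max x 0)

/-- The integral `∫_A f dμ` of `f` over `A` against the signed measure `μ`. -/
noncomputable def SM.integOn (μ : SM) (f : ℝ → ℝ) (A : Set ℝ) : ℝ :=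
  (∫ t in A, f t ∂μ.pos) - (∫ t in A, f t ∂μ.neg)

/-- `∫_0^x f dμ := ∫_{[0,x]} f dμ` for `x ≥ 0` and `:= -∫_{(x,0)} f dμ` for `x < 0`. -/
noncomputable def intRight (μ : SM) (f : ℝ → ℝ) (x : ℝ) : ℝ :=
  if 0 ≤ x then μ.integOn f (Set.Icc 0 x) else - μ.integOn f (Set.Ioo x 0)

/-- `(u, v)` is a solution of `-u'' + u μ = E u`: `u` is locally absolutely
continuous with `u(x) = u(0) + ∫_0^x v`, and
`v(x) = v(0) + ∫_0^x u dμ - E ∫_0^x u` (`v` is the right limit `u'(·+)`). -/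
structure IsSolution (μ : SM) (E : ℝ) (u v : ℝ → ℝ) : Prop where
  locInt : LocallyIntegrable v volume
  u_eq : ∀ x : ℝ, u x = u 0 + ∫ t in (0:ℝ)..x, v t
  v_eq : ∀ x : ℝ, v x = v 0 + intRight μ u x - E * ∫ t in (0:ℝ)..x, u t

/-- The total variation measure `|μ - E λ|`, `λ` Lebesgue measure. -/
noncomputable def tvWithE (μ : SM) (E : ℝ) : Measure ℝ :=
  tvSub (μ.pos + ENNReal.ofReal (-E) • volume) (μ.neg + ENNReal.ofReal E • volume)

/-- Membership in the Sobolev space `W¹₂(ℝ)` (continuous representative `u`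
with derivative `d`): `u, d ∈ L²` and `u(x) = u(0) + ∫_0^x d`. -/
def IsW12 (u d : ℝ → ℝ) : Prop :=
  MemLp u 2 volume ∧ MemLp d 2 volume ∧ ∀ x : ℝ, u x = u 0 + ∫ t in (0:ℝ)..x, d t

/-- Addition of signed measures. -/
noncomputable def SM.add (a b : SM) : SM := ⟨a.pos + b.pos, a.neg + b.neg⟩

/-- The translate `T_x μ = μ(· - x)`. -/
noncomputable def SM.translate (μ : SM) (x : ℝ) : SM :=
  ⟨Measure.map (fun y => y + x) μ.pos, Measure.map (fun y => y + x) μ.neg⟩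

/-- The scaled measure `μ ∘ β`, `(μ ∘ β)(A) = μ(β A)`. -/
noncomputable def SM.scale (μ : SM) (β : ℝ) : SM :=
  ⟨Measure.map (fun y => y / β) μ.pos, Measure.map (fun y => y / β) μ.neg⟩

/-- `μ` is a Gordon measure. -/
def IsGordon (μ : SM) : Prop :=
  μ.LocFin ∧ UnifLocBounded μ.tv ∧
  ∃ (μs : ℕ → SM) (p : ℕ → ℝ),
    (∀ m, 0 < p m) ∧ (∀ m, (μs m).LocFin) ∧ (∀ m, (μs m).IsPeriodic (p m)) ∧
    (∀ m, UnifLocBounded (μs m).tv) ∧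
    (∃ M : ℝ≥0∞, M < ⊤ ∧ ∀ m, normLoc (μs m).tv ≤ M) ∧
    Filter.Tendsto p Filter.atTop Filter.atTop ∧
    ∀ C : ℝ, Filter.Tendsto
      (fun m => Real.exp (C * p m) * ((tvDiff μ (μs m)) (Set.Icc (-(p m)) (2 * p m))).toReal)
      Filter.atTop (nhds 0)

/-!
On an interval `I` of length `δ`, `u x ^ 2 ≤ 2 u y ^ 2 + 2 (u x - u y) ^ 2` and Cauchy–Schwarz
gives `(u x - u y) ^ 2 ≤ δ ∫_I u' ^ 2`; averaging over `y ∈ I` bounds `sup_I u ^ 2` by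
`(2/δ) ∫_I u ^ 2 + 2δ ∫_I u' ^ 2`. Cutting `ℝ` into the intervals `[nδ, (n+1)δ)`, each of
`|μ|`-mass at most `‖μ‖_loc` when `δ ≤ 1`, and summing over `n` yields
`∫ u ^ 2 d|μ| ≤ ‖μ‖_loc ((2/δ) ‖u‖₂² + 2δ ‖u'‖₂²)`.
-/

theorem sq_integral_le_measureReal_univ_mul_integral_sq {α : Type*} [MeasurableSpace α]
    {μ : Measure α} [IsFiniteMeasure μ] {f : α → ℝ} (hf : MemLp f 2 μ) :
    (∫ x, f x ∂μ) ^ 2 ≤ μ.real univ * ∫ x, f x ^ 2 ∂μ := by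
  have hf1 : Integrable f μ := hf.integrable one_le_two
  -- `c ↦ ∫ (f - c) ^ 2` is a nonnegative quadratic, so its discriminant is nonpositive.
  have hquad : ∀ c : ℝ,
      0 ≤ μ.real univ * (c * c) + (-2 * ∫ x, f x ∂μ) * c + ∫ x, f x ^ 2 ∂μ := by
    intro c
    have hexp : ∫ x, (f x - c) ^ 2 ∂μ
        = μ.real univ * (c * c) + (-2 * ∫ x, f x ∂μ) * c + ∫ x, f x ^ 2 ∂μ := by
      have hsq : (fun x => (f x - c) ^ 2) = fun x => f x ^ 2 - (2 * c) * f x + c ^ 2 := by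
        ext x; ring
      rw [hsq, integral_add (f := fun x => f x ^ 2 - (2 * c) * f x)
          (hf.integrable_sq.sub (hf1.const_mul _)) (integrable_const _),
        integral_sub hf.integrable_sq (hf1.const_mul _), integral_const_mul, integral_const,
        smul_eq_mul]
      ring
    exact hexp ▸ integral_nonneg fun x => sq_nonneg _
  have hdiscrim := discrim_le_zero hquad
  rw [discrim] at hdiscrim
  linarith

theorem sq_intervalIntegral_le {f : ℝ → ℝ} {a b : ℝ}
    (hf : MemLp f 2 (volume.restrict (uIoc a b))) :
    (∫ t in a..b, f t) ^ 2 ≤ |b - a| * ∫ t in uIoc a b, f t ^ 2 := by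
  have : IsFiniteMeasure (volume.restrict (uIoc a b)) := by
    rw [isFiniteMeasure_restrict]; simp
  rw [← sq_abs, intervalIntegral.abs_integral_eq_abs_integral_uIoc, sq_abs]
  convert sq_integral_le_measureReal_univ_mul_integral_sq hf using 2
  simp [measureReal_def, Real.volume_uIoc]

theorem sq_le_of_sub_eq_intervalIntegral {u d : ℝ → ℝ} {a b x : ℝ} (hab : a < b)
    (hu : IntegrableOn (fun t => u t ^ 2) (Icc a b))
    (hd : MemLp d 2 (volume.restrict (Icc a b)))
    (hud : ∀ y ∈ Icc a b, u x - u y = ∫ t in y..x, d t) (hx : x ∈ Icc a b) :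
    u x ^ 2 ≤ 2 / (b - a) * (∫ t in Icc a b, u t ^ 2) + 2 * (b - a) * ∫ t in Icc a b, d t ^ 2 := by
  set C := ∫ t in Icc a b, d t ^ 2
  have hsub_le : ∀ y ∈ Icc a b, (u x - u y) ^ 2 ≤ (b - a) * C := by
    intro y hy
    have hIoc : uIoc y x ⊆ Icc a b := uIoc_subset_uIcc.trans (uIcc_subset_Icc hy hx)
    rw [hud y hy]
    calc (∫ t in y..x, d t) ^ 2 ≤ |x - y| * ∫ t in uIoc y x, d t ^ 2 :=
          sq_intervalIntegral_le (hd.mono_measure (Measure.restrict_mono hIoc le_rfl))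
      _ ≤ (b - a) * C := by
          gcongr
          · exact abs_sub_le_iff.2 ⟨by linarith [hx.2, hy.1], by linarith [hx.1, hy.2]⟩
          · exact setIntegral_mono_set hd.integrable_sq (ae_of_all _ fun t => sq_nonneg _)
              hIoc.eventuallyLE
  have hpt : ∀ y ∈ Icc a b, u x ^ 2 ≤ 2 * u y ^ 2 + 2 * ((b - a) * C) := fun y hy => by
    nlinarith [hsub_le y hy, sq_nonneg (u x - 2 * u y)]
  have hvol : volume.real (Icc a b) = b - a := by simp [hab.le]
  have hint : ∫ _ in Icc a b, u x ^ 2 ≤ ∫ y in Icc a b, (2 * u y ^ 2 + 2 * ((b - a) * C)) :=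
    setIntegral_mono_on (integrableOn_const (by simp))
      ((hu.const_mul 2).add (integrableOn_const (by simp))) measurableSet_Icc hpt
  rw [setIntegral_const, integral_add (hu.const_mul 2) (integrableOn_const (by simp)),
    setIntegral_const, integral_const_mul, hvol, smul_eq_mul, smul_eq_mul] at hint
  have hba : 0 < b - a := sub_pos.2 hab
  refine le_of_mul_le_mul_left (hint.trans_eq ?_) hba
  field_simp

theorem lintegral_eq_tsum_lintegral_Ico_zsmul (μ : Measure ℝ) (f : ℝ → ℝ≥0∞) {p : ℝ}
    (hp : 0 < p) :
    ∫⁻ x, f x ∂μ = ∑' n : ℤ, ∫⁻ x in Ico (n • p) ((n + 1) • p), f x ∂μ := by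
  rw [← lintegral_iUnion (fun _ => measurableSet_Ico) (pairwise_disjoint_Ico_zsmul p),
    iUnion_Ico_zsmul hp, Measure.restrict_univ]

theorem hasSum_integral_Ico_zsmul {μ : Measure ℝ} {f : ℝ → ℝ} (hf : Integrable f μ) {p : ℝ}
    (hp : 0 < p) :
    HasSum (fun n : ℤ => ∫ x in Ico (n • p) ((n + 1) • p), f x ∂μ) (∫ x, f x ∂μ) := by
  simpa only [iUnion_Ico_zsmul hp, Measure.restrict_univ] using
    hasSum_integral_iUnion (fun _ => measurableSet_Ico) (pairwise_disjoint_Ico_zsmul p)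
      hf.integrableOn

theorem measure_le_normLoc {ν : Measure ℝ} {s : Set ℝ} {a : ℝ} (hs : s ⊆ Icc a (a + 1)) :
    ν s ≤ normLoc ν :=
  (measure_mono hs).trans (le_iSup (fun x => ν (Icc x (x + 1))) a)

theorem IsW12.sub_eq_intervalIntegral {u d : ℝ → ℝ} (h : IsW12 u d) (x y : ℝ) :
    u x - u y = ∫ t in y..x, d t := by
  have hd : ∀ a b : ℝ, IntervalIntegrable d volume a b := fun a b =>
    ((h.2.1.locallyIntegrable one_le_two).integrableOn_isCompact
      isCompact_uIcc).intervalIntegrable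
  rw [h.2.2 x, h.2.2 y, add_sub_add_left_eq_sub,
    intervalIntegral.integral_interval_sub_left (hd 0 x) (hd 0 y)]

theorem setLIntegral_Ico_sq_le_normLoc_mul (ν : Measure ℝ) {a b : ℝ} (hab : a < b)
    (hba : b ≤ a + 1) {u d : ℝ → ℝ} (hW : IsW12 u d) :
    ∫⁻ x in Ico a b, ENNReal.ofReal (u x ^ 2) ∂ν ≤
      ENNReal.ofReal (2 / (b - a) * (∫ x in Ico a b, u x ^ 2)
        + 2 * (b - a) * ∫ x in Ico a b, d x ^ 2) * normLoc ν := by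
  set c := 2 / (b - a) * (∫ x in Ico a b, u x ^ 2) + 2 * (b - a) * ∫ x in Ico a b, d x ^ 2
  have hpt : ∀ x ∈ Ico a b, ENNReal.ofReal (u x ^ 2) ≤ ENNReal.ofReal c := fun x hx => by
    refine ENNReal.ofReal_le_ofReal ?_
    have := sq_le_of_sub_eq_intervalIntegral hab hW.1.integrable_sq.integrableOn
      (hW.2.1.restrict _) (fun y _ => hW.sub_eq_intervalIntegral x y) (Ico_subset_Icc_self hx)
    rwa [integral_Icc_eq_integral_Ico, integral_Icc_eq_integral_Ico] at this
  calc ∫⁻ x in Ico a b, ENNReal.ofReal (u x ^ 2) ∂ν ≤ ∫⁻ _ in Ico a b, ENNReal.ofReal c ∂ν :=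
        setLIntegral_mono' measurableSet_Ico hpt
    _ = ENNReal.ofReal c * ν (Ico a b) := setLIntegral_const _ _
    _ ≤ ENNReal.ofReal c * normLoc ν := by
        gcongr
        exact measure_le_normLoc (Ico_subset_Icc_self.trans (Icc_subset_Icc_right hba))

theorem lintegral_sq_le_normLoc_mul (ν : Measure ℝ) {δ : ℝ} (hδ0 : 0 < δ) (hδ1 : δ ≤ 1)
    {u d : ℝ → ℝ} (hW : IsW12 u d) :
    ∫⁻ x, ENNReal.ofReal (u x ^ 2) ∂ν ≤
      ENNReal.ofReal (2 / δ * (∫ x, u x ^ 2) + 2 * δ * ∫ x, d x ^ 2) * normLoc ν := by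
  set I : ℤ → Set ℝ := fun n => Ico (n • δ) ((n + 1) • δ)
  set c : ℤ → ℝ := fun n => 2 / δ * (∫ x in I n, u x ^ 2) + 2 * δ * ∫ x in I n, d x ^ 2
  have hc : HasSum c (2 / δ * (∫ x, u x ^ 2) + 2 * δ * ∫ x, d x ^ 2) :=
    ((hasSum_integral_Ico_zsmul hW.1.integrable_sq hδ0).mul_left _).add
      ((hasSum_integral_Ico_zsmul hW.2.1.integrable_sq hδ0).mul_left _)
  have hc_nonneg : ∀ n, 0 ≤ c n := fun n => by
    have hu := setIntegral_nonneg (μ := volume) (s := I n) measurableSet_Ico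
      fun x _ => sq_nonneg (u x)
    have hd := setIntegral_nonneg (μ := volume) (s := I n) measurableSet_Ico
      fun x _ => sq_nonneg (d x)
    positivity
  have hpiece : ∀ n,
      ∫⁻ x in I n, ENNReal.ofReal (u x ^ 2) ∂ν ≤ ENNReal.ofReal (c n) * normLoc ν := by
    intro n
    have hlen : (n + 1) • δ - n • δ = δ := by rw [add_zsmul, one_zsmul]; ring
    simpa only [hlen] using setLIntegral_Ico_sq_le_normLoc_mul ν (a := n • δ) (b := (n + 1) • δ)
      (by linarith) (by linarith) hW
  calc ∫⁻ x, ENNReal.ofReal (u x ^ 2) ∂ν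
      = ∑' n, ∫⁻ x in I n, ENNReal.ofReal (u x ^ 2) ∂ν :=
        lintegral_eq_tsum_lintegral_Ico_zsmul ν _ hδ0
    _ ≤ ∑' n, ENNReal.ofReal (c n) * normLoc ν := ENNReal.tsum_le_tsum hpiece
    _ = _ := by
        rw [ENNReal.tsum_mul_right, ← ENNReal.ofReal_tsum_of_nonneg hc_nonneg hc.summable,
          hc.tsum_eq]

theorem lintegral_sq_le_of_unifLocBounded {ν : Measure ℝ} (hν : UnifLocBounded ν) {δ : ℝ}
    (hδ0 : 0 < δ) (hδ1 : δ ≤ 1) {u d : ℝ → ℝ} (hW : IsW12 u d) :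
    ∫⁻ x, ENNReal.ofReal (u x ^ 2) ∂ν ≤
      ENNReal.ofReal (4 * δ * (normLoc ν).toReal * (∫ x, d x ^ 2)
        + (4 * (normLoc ν).toReal / δ) * ∫ x, u x ^ 2) := by
  set M := (normLoc ν).toReal
  have hU : 0 ≤ ∫ x, u x ^ 2 := integral_nonneg fun x => sq_nonneg _
  have hD : 0 ≤ ∫ x, d x ^ 2 := integral_nonneg fun x => sq_nonneg _
  refine (lintegral_sq_le_normLoc_mul ν hδ0 hδ1 hW).trans ?_
  rw [← ENNReal.ofReal_toReal hν.ne, ← ENNReal.ofReal_mul (by positivity)]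
  refine ENNReal.ofReal_le_ofReal ?_
  calc (2 / δ * (∫ x, u x ^ 2) + 2 * δ * ∫ x, d x ^ 2) * M
      ≤ 2 * ((2 / δ * (∫ x, u x ^ 2) + 2 * δ * ∫ x, d x ^ 2) * M) := by
        linarith [show 0 ≤ (2 / δ * (∫ x, u x ^ 2) + 2 * δ * ∫ x, d x ^ 2) * M by positivity]
    _ = 4 * δ * M * (∫ x, d x ^ 2) + (4 * M / δ) * ∫ x, u x ^ 2 := by ring

theorem formBounded_of_unifLocBounded_general (μ : SM)
    (hub : UnifLocBounded μ.tv) :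
    (∀ c : ℝ, 0 < c → c < 1 → ∃ γ : ℝ, 0 ≤ γ ∧ ∀ u d : ℝ → ℝ, IsW12 u d →
      ∫⁻ x, ENNReal.ofReal ((u x) ^ 2) ∂μ.tv ≤
        ENNReal.ofReal (c * (∫ x, (d x) ^ 2) + γ * ∫ x, (u x) ^ 2)) ∧
    (∀ δ : ℝ, 0 < δ → δ < 1 → ∀ u d : ℝ → ℝ, IsW12 u d →
      ∫⁻ x, ENNReal.ofReal ((u x) ^ 2) ∂μ.tv ≤
        ENNReal.ofReal (4 * δ * (normLoc μ.tv).toReal * (∫ x, (d x) ^ 2)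
          + (4 * (normLoc μ.tv).toReal / δ) * ∫ x, (u x) ^ 2)) := by
  have hbound := fun δ (hδ0 : 0 < δ) (hδ1 : δ < 1) (u d : ℝ → ℝ) (hW : IsW12 u d) =>
    lintegral_sq_le_of_unifLocBounded hub hδ0 hδ1.le hW
  refine ⟨fun c hc0 hc1 => ?_, hbound⟩
  set M := (normLoc μ.tv).toReal
  have hM0 : 0 ≤ M := ENNReal.toReal_nonneg
  set δ := c / (4 * (M + 1))
  have hδ0 : 0 < δ := by positivity
  have hδ1 : δ < 1 := by
    rw [div_lt_one (by positivity)]; linarith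
  have hδM : 4 * δ * M ≤ c := by
    rw [mul_comm 4, div_mul_eq_mul_div, div_mul_eq_mul_div, div_le_iff₀ (by positivity)]
    nlinarith
  refine ⟨4 * M / δ, by positivity, fun u d hW => (hbound δ hδ0 hδ1 u d hW).trans ?_⟩
  have hD : 0 ≤ ∫ x, d x ^ 2 := integral_nonneg fun x => sq_nonneg _
  gcongr

/-- For a uniformly locally bounded signed Borel measure `μ`,
`|μ|` is `-Δ`-form bounded with relative bound zero: for every `0 < c < 1`
there is `γ ≥ 0` with `∫ |u|² d|μ| ≤ c ‖u'‖₂² + γ ‖u‖₂²` on `W¹₂(ℝ)`; in fact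
for every `δ ∈ (0,1)`,
`∫ |u|² d|μ| ≤ 4δ‖μ‖_loc ‖u'‖₂² + (4‖μ‖_loc/δ) ‖u‖₂²`. -/
theorem formBounded_of_unifLocBounded (μ : SM) (hloc : μ.LocFin)
    (hub : UnifLocBounded μ.tv) :
    (∀ c : ℝ, 0 < c → c < 1 → ∃ γ : ℝ, 0 ≤ γ ∧ ∀ u d : ℝ → ℝ, IsW12 u d →
      ∫⁻ x, ENNReal.ofReal ((u x) ^ 2) ∂μ.tv ≤
        ENNReal.ofReal (c * (∫ x, (d x) ^ 2) + γ * ∫ x, (u x) ^ 2)) ∧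
    (∀ δ : ℝ, 0 < δ → δ < 1 → ∀ u d : ℝ → ℝ, IsW12 u d →
      ∫⁻ x, ENNReal.ofReal ((u x) ^ 2) ∂μ.tv ≤
        ENNReal.ofReal (4 * δ * (normLoc μ.tv).toReal * (∫ x, (d x) ^ 2)
          + (4 * (normLoc μ.tv).toReal / δ) * ∫ x, (u x) ^ 2)) :=
  formBounded_of_unifLocBounded_general μ hub
end

section
/- Let μ be a Gordon measure with p_m-periodic approximants (μ^m), let E ∈ ℝ, let (u,v) be a solution of −u'' + uμ = Eu, and for each m let (u_m, v_m) be the solution of −u'' + uμ^m = Eu with the same initial data at 0 (u_m(0) = u(0), v_m(0) = v(0), |u(0)|² + |v(0)|² = 1). Then there exists a constant C ≥ 0, independent of m, such that for all x ∈ ℝ, ‖(u(x) − u_m(x), v(x) − v_m(x))‖ ≤ C e^{C|x|} |μ − μ^m|(I_x). -/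
open MeasureTheory Filter Set Real
open scoped ENNReal

/-!
On an interval `[a, t]` the increment of `v` is bounded by `(|μ|((a, t]) + |E|) · max |u|` and the
increment of `u` by `(t - a) · max |v|`. With `B = ‖μ‖_loc + |E|`, on intervals of length
`1 / (2B + 4)` these two bounds close up, so `|u| + |v|` grows at most by the factor `2B + 4`;
chaining the steps bounds `|u| + |v|` by an exponential in `|x|`. The pair
`(u - u_m, v - v_m)` vanishes at `0` and obeys the same increment bounds with the uniform constant
`sup_m ‖μ^m‖_loc + |E|` and the additional source term `max_{I_x} |u| · |μ - μ^m|(I_x)`, so the same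
iteration bounds it by `C e^{C|x|} |μ - μ^m|(I_x)`.
-/

namespace MeasureTheory.Measure

variable {X : Type*} [MeasurableSpace X]

theorem add_sub_eq_add_sub (μ ν : Measure X) [IsFiniteMeasure μ] [IsFiniteMeasure ν] :
    μ + (ν - μ) = ν + (μ - ν) := by
  rw [← toSignedMeasure_eq_toSignedMeasure_iff, toSignedMeasure_add, toSignedMeasure_add,
    add_comm ν.toSignedMeasure]
  exact sub_eq_sub_iff_add_eq_add.mp sub_toSignedMeasure_eq_toSignedMeasure_sub

theorem integral_sub_integral_eq {μ ν : Measure X} [IsFiniteMeasure μ] [IsFiniteMeasure ν]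
    {f : X → ℝ} (hμ : Integrable f μ) (hν : Integrable f ν) :
    ∫ x, f x ∂μ - ∫ x, f x ∂ν = ∫ x, f x ∂(μ - ν) - ∫ x, f x ∂(ν - μ) := by
  have h := congrArg (fun ρ => ∫ x, f x ∂ρ) (add_sub_eq_add_sub μ ν)
  rw [integral_add_measure hμ (hν.mono_measure sub_le),
    integral_add_measure hν (hμ.mono_measure sub_le)] at h
  linarith

theorem abs_integral_sub_integral_le {μ ν : Measure X} [IsFiniteMeasure μ] [IsFiniteMeasure ν]
    {f : X → ℝ} {S : ℝ} (hμ : Integrable f μ) (hν : Integrable f ν)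
    (hμS : ∀ᵐ x ∂μ, |f x| ≤ S) (hνS : ∀ᵐ x ∂ν, |f x| ≤ S) :
    |∫ x, f x ∂μ - ∫ x, f x ∂ν| ≤ S * ((μ - ν).real univ + (ν - μ).real univ) := by
  have bound : ∀ ρ ρ' : Measure X, [IsFiniteMeasure ρ] → (∀ᵐ x ∂ρ, |f x| ≤ S) →
      |∫ x, f x ∂(ρ - ρ')| ≤ S * (ρ - ρ').real univ := fun ρ ρ' _ hρ =>
    norm_integral_le_of_norm_le_const (ae_mono sub_le hρ : ∀ᵐ x ∂(ρ - ρ'), ‖f x‖ ≤ S)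
  rw [integral_sub_integral_eq hμ hν, mul_add]
  exact (abs_sub _ _).trans (add_le_add (bound μ ν hμS) (bound ν μ hνS))

instance isLocallyFiniteMeasure_add [TopologicalSpace X] (μ ν : Measure X)
    [IsLocallyFiniteMeasure μ] [IsLocallyFiniteMeasure ν] : IsLocallyFiniteMeasure (μ + ν) where
  finiteAtNhds x := by
    obtain ⟨s, hs, hμs⟩ := μ.finiteAt_nhds x
    obtain ⟨t, ht, hνt⟩ := ν.finiteAt_nhds x
    refine ⟨s ∩ t, Filter.inter_mem hs ht, ?_⟩
    rw [add_apply]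
    exact ENNReal.add_lt_top.mpr ⟨(measure_mono inter_subset_left).trans_lt hμs,
      (measure_mono inter_subset_right).trans_lt hνt⟩

end MeasureTheory.Measure

theorem abs_setIntegral_sub_setIntegral_le_tvSub {a b : Measure ℝ} {A : Set ℝ}
    (hA : MeasurableSet A) (ha : a A ≠ ∞) (hb : b A ≠ ∞) {f : ℝ → ℝ}
    (hfa : IntegrableOn f A a) (hfb : IntegrableOn f A b) {S : ℝ} (hS : ∀ x ∈ A, |f x| ≤ S) :
    |∫ x in A, f x ∂a - ∫ x in A, f x ∂b| ≤ S * (tvSub a b A).toReal := by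
  have : IsFiniteMeasure (a.restrict A) := isFiniteMeasure_restrict.mpr ha
  have : IsFiniteMeasure (b.restrict A) := isFiniteMeasure_restrict.mpr hb
  have hSa : ∀ᵐ x ∂a.restrict A, |f x| ≤ S := ae_restrict_of_forall_mem hA hS
  have hSb : ∀ᵐ x ∂b.restrict A, |f x| ≤ S := ae_restrict_of_forall_mem hA hS
  convert Measure.abs_integral_sub_integral_le hfa hfb hSa hSb using 2
  rw [tvSub, Measure.add_apply, ENNReal.toReal_add
      (ne_top_of_le_ne_top ha (Measure.sub_le A)) (ne_top_of_le_ne_top hb (Measure.sub_le A)),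
    ← Measure.restrict_sub_eq_restrict_sub_restrict hA,
    ← Measure.restrict_sub_eq_restrict_sub_restrict hA, measureReal_restrict_apply_univ,
    measureReal_restrict_apply_univ, measureReal_def, measureReal_def]

theorem Ix_of_nonneg {x : ℝ} (hx : 0 ≤ x) : Ix x = Icc 0 x := by
  rw [Ix, min_eq_right hx, max_eq_left hx]

theorem Ix_of_nonpos {x : ℝ} (hx : x ≤ 0) : Ix x = Icc x 0 := by
  rw [Ix, min_eq_left hx, max_eq_right hx]

theorem zero_mem_Ix (x : ℝ) : (0 : ℝ) ∈ Ix x := ⟨min_le_right x 0, le_max_right x 0⟩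

theorem abs_le_abs_of_mem_Ix {s x : ℝ} (hs : s ∈ Ix x) : |s| ≤ |x| := by
  rcases le_total 0 x with hx | hx
  · rw [Ix_of_nonneg hx] at hs
    rw [abs_of_nonneg hs.1, abs_of_nonneg hx]
    exact hs.2
  · rw [Ix_of_nonpos hx] at hs
    rw [abs_of_nonpos hs.2, abs_of_nonpos hx]
    linarith [hs.1]

-- `2 * B + 4` is both the inverse step length and the growth factor per step in
-- `abs_add_abs_add_le_of_short_interval`; squaring absorbs the rounding of the number of steps.
def growthRate (B : ℝ) : ℝ := (2 * B + 4) ^ 2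

theorem growthRate_nonneg (B : ℝ) : 0 ≤ growthRate B := sq_nonneg _

section Growth

variable {U V : ℝ → ℝ} {ε B : ℝ}

theorem abs_add_abs_add_le_of_short_interval (hε : 0 ≤ ε) (hB : 0 ≤ B) {a t : ℝ} (hat : a ≤ t)
    (hlen : (2 * B + 4) * (t - a) ≤ 1) (hUc : ContinuousOn U (Icc a t))
    (hU : ∀ s ∈ Icc a t, U s - U a = ∫ r in a..s, V r)
    (hV : ∀ S, (∀ r ∈ Icc a t, |U r| ≤ S) → ∀ s ∈ Icc a t, |V s - V a| ≤ ε + B * S) :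
    |U t| + |V t| + ε ≤ (2 * B + 4) * (|U a| + |V a| + ε) := by
  obtain ⟨s₀, hs₀, hmax⟩ := isCompact_Icc.exists_isMaxOn (nonempty_Icc.mpr hat) hUc.abs
  set S := |U s₀|
  have hS : ∀ r ∈ Icc a t, |U r| ≤ S := fun r hr => hmax hr
  have hVs : ∀ s ∈ Icc a t, |V s| ≤ |V a| + ε + B * S := fun s hs => by
    linarith [hV S hS s hs, abs_sub_abs_le_abs_sub (V s) (V a)]
  have hS_le : S ≤ |U a| + (|V a| + ε + B * S) * (t - a) := by
    have hint := intervalIntegral.norm_integral_le_of_norm_le_const (f := V)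
      (C := |V a| + ε + B * S)
      fun s hs => hVs s (Ioc_subset_Icc_self.trans (Icc_subset_Icc_right hs₀.2)
        (uIoc_of_le hs₀.1 ▸ hs))
    rw [← hU s₀ hs₀, Real.norm_eq_abs, abs_of_nonneg (sub_nonneg.mpr hs₀.1)] at hint
    have hmono : (|V a| + ε + B * S) * (s₀ - a) ≤ (|V a| + ε + B * S) * (t - a) :=
      mul_le_mul_of_nonneg_left (by linarith [hs₀.2]) (by positivity)
    linarith [abs_sub_abs_le_abs_sub (U s₀) (U a)]
  -- On an interval of length at most `1 / (2B + 4)`, `S` absorbs its own contribution.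
  have hS_le' : S ≤ 2 * (|U a| + |V a| + ε) := by
    have hshort : (|V a| + ε) * (t - a) ≤ |V a| + ε :=
      mul_le_of_le_one_right (by positivity) (by nlinarith)
    have habsorb : B * S * (t - a) ≤ S / 2 := by nlinarith [abs_nonneg (U s₀)]
    nlinarith
  have hVt := hVs t ⟨hat, le_rfl⟩
  have hBS : B * S ≤ B * (2 * (|U a| + |V a| + ε)) := mul_le_mul_of_nonneg_left hS_le' hB
  nlinarith [hS t ⟨hat, le_rfl⟩, abs_nonneg (U a), abs_nonneg (V a)]

theorem abs_add_abs_add_le_pow_of_increment_bound (hε : 0 ≤ ε) (hB : 0 ≤ B)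
    (hUc : Continuous U) (hU : ∀ a t, U t - U a = ∫ r in a..t, V r) {x : ℝ}
    (hV : ∀ a t, 0 ≤ a → a ≤ t → t ≤ x → t ≤ a + 1 →
      ∀ S, (∀ r ∈ Icc a t, |U r| ≤ S) → |V t - V a| ≤ ε + B * S)
    (n : ℕ) {t : ℝ} (ht0 : 0 ≤ t) (htx : t ≤ x) (htn : (2 * B + 4) * t ≤ n) :
    |U t| + |V t| + ε ≤ (2 * B + 4) ^ n * (|U 0| + |V 0| + ε) := by
  set M := 2 * B + 4
  have hM4 : 4 ≤ M := by linarith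
  induction n generalizing t with
  | zero =>
    rw [Nat.cast_zero] at htn
    obtain rfl : t = 0 := le_antisymm (by nlinarith) ht0
    simp
  | succ n ih =>
    set a := max 0 (t - 1 / M) with ha
    have hinv : 1 / M * M = 1 := one_div_mul_cancel (by linarith)
    have ha0 : 0 ≤ a := le_max_left _ _
    have hat : a ≤ t := max_le ht0 (by linarith [one_div_pos.mpr (show (0 : ℝ) < M by linarith)])
    have hlen : M * (t - a) ≤ 1 := by nlinarith [le_max_right 0 (t - 1 / M)]
    have han : M * a ≤ n := by
      rcases max_cases 0 (t - 1 / M) with ⟨h, -⟩ | ⟨h, -⟩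
      · rw [ha, h, mul_zero]; exact Nat.cast_nonneg n
      · rw [ha, h]; push_cast at htn; nlinarith
    have hstep_bound := abs_add_abs_add_le_of_short_interval hε hB hat hlen hUc.continuousOn
      (fun s _ => hU a s) fun S hS s hs =>
        hV a s ha0 hs.1 (hs.2.trans htx) (by nlinarith [hs.2]) S
          fun r hr => hS r ⟨hr.1, hr.2.trans hs.2⟩
    calc |U t| + |V t| + ε ≤ M * (|U a| + |V a| + ε) := hstep_bound
      _ ≤ M * (M ^ n * (|U 0| + |V 0| + ε)) := by
          gcongr
          linarith [ih ha0 (hat.trans htx) han, abs_nonneg (U a), abs_nonneg (V a)]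
      _ = M ^ (n + 1) * (|U 0| + |V 0| + ε) := by ring

theorem abs_add_abs_le_of_increment_bound_of_nonneg (hε : 0 ≤ ε) (hB : 0 ≤ B)
    (hUc : Continuous U) (hU : ∀ a t, U t - U a = ∫ r in a..t, V r) {x : ℝ} (hx : 0 ≤ x)
    (hV : ∀ a t, 0 ≤ a → a ≤ t → t ≤ x → t ≤ a + 1 →
      ∀ S, (∀ r ∈ Icc a t, |U r| ≤ S) → |V t - V a| ≤ ε + B * S) :
    |U x| + |V x| ≤ (|U 0| + |V 0| + ε) * exp (growthRate B * (x + 1)) := by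
  set M := 2 * B + 4 with hM
  have hM1 : 1 ≤ M := by linarith
  set n := ⌈M * x⌉₊
  have hn : (n : ℝ) < M * x + 1 := Nat.ceil_lt_add_one (by positivity)
  have hpow : M ^ n ≤ exp (growthRate B * (x + 1)) :=
    calc M ^ n ≤ exp M ^ n := pow_le_pow_left₀ (by linarith) (by linarith [add_one_le_exp M]) n
      _ = exp (n * M) := (exp_nat_mul M n).symm
      _ ≤ exp (growthRate B * (x + 1)) := by
          rw [growthRate, ← hM]
          exact exp_le_exp.mpr (by nlinarith)
  have h := abs_add_abs_add_le_pow_of_increment_bound hε hB hUc hU hV n hx le_rfl (Nat.le_ceil _)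
  calc |U x| + |V x| ≤ M ^ n * (|U 0| + |V 0| + ε) := by linarith
    _ ≤ exp (growthRate B * (x + 1)) * (|U 0| + |V 0| + ε) := by gcongr
    _ = (|U 0| + |V 0| + ε) * exp (growthRate B * (x + 1)) := mul_comm _ _

theorem abs_add_abs_le_of_increment_bound (hε : 0 ≤ ε) (hB : 0 ≤ B)
    (hUc : Continuous U) (hU : ∀ a t, U t - U a = ∫ r in a..t, V r) (x : ℝ)
    (hV : ∀ a t, a ≤ t → Icc a t ⊆ Ix x → t ≤ a + 1 →
      ∀ S, (∀ r ∈ Icc a t, |U r| ≤ S) → |V t - V a| ≤ ε + B * S) :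
    |U x| + |V x| ≤ (|U 0| + |V 0| + ε) * exp (growthRate B * (|x| + 1)) := by
  rcases le_total 0 x with hx | hx
  · rw [abs_of_nonneg hx]
    refine abs_add_abs_le_of_increment_bound_of_nonneg hε hB hUc hU hx
      fun a t ha hat htx hta => hV a t hat ?_ hta
    rw [Ix_of_nonneg hx]
    exact Icc_subset_Icc ha htx
  · -- Reflect: `s ↦ (U (-s), -V (-s))` satisfies the hypotheses on `[0, -x]`.
    have hrefl := abs_add_abs_le_of_increment_bound_of_nonneg (U := fun s => U (-s))
      (V := fun s => -V (-s)) hε hB (hUc.comp continuous_neg) (fun a t => by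
        rw [intervalIntegral.integral_neg, intervalIntegral.integral_comp_neg (f := V),
          intervalIntegral.integral_symm, neg_neg, hU]) (neg_nonneg.mpr hx)
      fun a t ha hat htx hta S hS => by
        rw [neg_sub_neg]
        refine hV (-t) (-a) (neg_le_neg hat) ?_ (by linarith) S fun r hr => ?_
        · rw [Ix_of_nonpos hx]
          exact Icc_subset_Icc (by linarith) (by linarith)
        · simpa using hS (-r) ⟨le_neg_of_le_neg hr.2, neg_le_of_neg_le hr.1⟩
    simpa [abs_of_nonpos hx] using hrefl

end Growth

namespace SM

variable {μ : SM} {f g : ℝ → ℝ}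

theorem integOn_union (hμ : μ.LocFin) (hf : Continuous f) {A B : Set ℝ} (hAB : Disjoint A B)
    (hB : MeasurableSet B) {c d : ℝ} (hcd : A ∪ B ⊆ Icc c d) :
    μ.integOn f (A ∪ B) = μ.integOn f A + μ.integOn f B := by
  have split : ∀ ν : Measure ℝ, IsLocallyFiniteMeasure ν →
      ∫ x in A ∪ B, f x ∂ν = ∫ x in A, f x ∂ν + ∫ x in B, f x ∂ν := fun ν _ =>
    have hI : IntegrableOn f (A ∪ B) ν := hf.integrableOn_Icc.mono_set hcd
    setIntegral_union hAB hB (hI.mono_set subset_union_left) (hI.mono_set subset_union_right)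
  rw [integOn, integOn, integOn, split _ hμ.1, split _ hμ.2]
  ring

theorem integOn_sub (hμ : μ.LocFin) (hf : Continuous f) (hg : Continuous g) (a t : ℝ) :
    μ.integOn f (Ioc a t) - μ.integOn g (Ioc a t) = μ.integOn (f - g) (Ioc a t) := by
  obtain ⟨_, _⟩ := hμ
  simp only [integOn, Pi.sub_apply]
  rw [integral_sub hf.integrableOn_Ioc hg.integrableOn_Ioc,
    integral_sub hf.integrableOn_Ioc hg.integrableOn_Ioc]
  ring

theorem abs_integOn_le (hμ : μ.LocFin) (hf : Continuous f) {a t S : ℝ}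
    (hS : ∀ x ∈ Ioc a t, |f x| ≤ S) :
    |μ.integOn f (Ioc a t)| ≤ S * (μ.tv (Ioc a t)).toReal := by
  obtain ⟨_, _⟩ := hμ
  exact abs_setIntegral_sub_setIntegral_le_tvSub measurableSet_Ioc measure_Ioc_lt_top.ne
    measure_Ioc_lt_top.ne hf.integrableOn_Ioc hf.integrableOn_Ioc hS

theorem abs_integOn_sub_integOn_le {ν : SM} (hμ : μ.LocFin) (hν : ν.LocFin) (hf : Continuous f)
    {a t S : ℝ} (hS : ∀ x ∈ Ioc a t, |f x| ≤ S) :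
    |μ.integOn f (Ioc a t) - ν.integOn f (Ioc a t)| ≤ S * (tvDiff μ ν (Ioc a t)).toReal := by
  obtain ⟨_, _⟩ := hμ
  obtain ⟨_, _⟩ := hν
  have hdiff : μ.integOn f (Ioc a t) - ν.integOn f (Ioc a t) =
      SM.integOn ⟨μ.pos + ν.neg, ν.pos + μ.neg⟩ f (Ioc a t) := by
    simp only [integOn, Measure.restrict_add]
    rw [integral_add_measure hf.integrableOn_Ioc hf.integrableOn_Ioc,
      integral_add_measure hf.integrableOn_Ioc hf.integrableOn_Ioc]
    ring
  rw [hdiff]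
  exact abs_integOn_le (μ := ⟨μ.pos + ν.neg, ν.pos + μ.neg⟩) ⟨inferInstance, inferInstance⟩ hf hS

theorem abs_integOn_sub_mul_integral_le (hμ : μ.LocFin) (hf : Continuous f) (E : ℝ) {a t S : ℝ}
    (hat : a ≤ t) (hta : t ≤ a + 1) (hS : ∀ x ∈ Icc a t, |f x| ≤ S) :
    |μ.integOn f (Ioc a t) - E * ∫ x in a..t, f x| ≤ ((μ.tv (Ioc a t)).toReal + |E|) * S := by
  have hS0 : 0 ≤ S := (abs_nonneg _).trans (hS a ⟨le_rfl, hat⟩)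
  have hmeas := abs_integOn_le hμ hf fun x hx => hS x (Ioc_subset_Icc_self hx)
  have hleb : |∫ x in a..t, f x| ≤ S := by
    have h := intervalIntegral.norm_integral_le_of_norm_le_const (C := S) (f := f) fun x hx =>
      hS x (Ioc_subset_Icc_self (uIoc_of_le hat ▸ hx))
    rw [abs_of_nonneg (sub_nonneg.mpr hat)] at h
    exact h.trans (mul_le_of_le_one_right hS0 (by linarith))
  calc |μ.integOn f (Ioc a t) - E * ∫ x in a..t, f x|
      ≤ |μ.integOn f (Ioc a t)| + |E| * |∫ x in a..t, f x| := by
        rw [← abs_mul]; exact abs_sub _ _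
    _ ≤ S * (μ.tv (Ioc a t)).toReal + |E| * S := by gcongr
    _ = ((μ.tv (Ioc a t)).toReal + |E|) * S := by ring

end SM

theorem tvDiff_apply_Icc_ne_top {μ μ' : SM} (hμ : μ.LocFin) (hμ' : μ'.LocFin) (c d : ℝ) :
    tvDiff μ μ' (Icc c d) ≠ ⊤ := by
  obtain ⟨_, _⟩ := hμ
  obtain ⟨_, _⟩ := hμ'
  have hle : tvDiff μ μ' ≤ (μ.pos + μ'.neg) + (μ'.pos + μ.neg) :=
    add_le_add Measure.sub_le Measure.sub_le
  exact ne_top_of_le_ne_top isCompact_Icc.measure_lt_top.ne (hle _)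

theorem toReal_measure_Ioc_le_of_normLoc_le {ν : Measure ℝ} {M : ℝ≥0∞} (hM : M ≠ ⊤)
    (hν : normLoc ν ≤ M) {a t : ℝ} (hta : t ≤ a + 1) : (ν (Ioc a t)).toReal ≤ M.toReal :=
  ENNReal.toReal_mono hM <|
    (measure_mono (Ioc_subset_Icc_self.trans (Icc_subset_Icc_right hta))).trans <|
    (le_iSup (fun y => ν (Icc y (y + 1))) a).trans hν

theorem intRight_eq_integOn_sub_integOn {μ : SM} (hμ : μ.LocFin) {f : ℝ → ℝ} (hf : Continuous f)
    {c x : ℝ} (hcx : c ≤ x) (hc0 : c < 0) :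
    intRight μ f x = μ.integOn f (Ioc c x) - μ.integOn f (Ioo c 0) := by
  unfold intRight
  split_ifs with hx
  · have hsplit := Ioo_union_Icc_eq_Ioc hc0 hx
    rw [← hsplit, SM.integOn_union hμ hf
      ((Iio_disjoint_Ici le_rfl).mono Ioo_subset_Iio_self Icc_subset_Ici_self) measurableSet_Icc
      (hsplit.subset.trans Ioc_subset_Icc_self)]
    ring
  · rw [not_le] at hx
    have hsplit := Ioc_union_Ioo_eq_Ioo hcx hx
    rw [← hsplit, SM.integOn_union hμ hf
      ((Iic_disjoint_Ioi le_rfl).mono Ioc_subset_Iic_self Ioo_subset_Ioi_self) measurableSet_Ioo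
      (hsplit.subset.trans Ioo_subset_Icc_self)]
    ring

theorem intRight_sub_intRight {μ : SM} (hμ : μ.LocFin) {f : ℝ → ℝ} (hf : Continuous f)
    {a t : ℝ} (hat : a ≤ t) :
    intRight μ f t - intRight μ f a = μ.integOn f (Ioc a t) := by
  have hc0 : min a 0 - 1 < 0 := by linarith [min_le_right a 0]
  have hca : min a 0 - 1 ≤ a := by linarith [min_le_left a 0]
  have hsplit := Ioc_union_Ioc_eq_Ioc hca hat
  rw [intRight_eq_integOn_sub_integOn hμ hf (hca.trans hat) hc0,
    intRight_eq_integOn_sub_integOn hμ hf hca hc0, ← hsplit,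
    SM.integOn_union hμ hf (Ioc_disjoint_Ioc_of_le le_rfl) measurableSet_Ioc
      (hsplit.subset.trans Ioc_subset_Icc_self)]
  ring

namespace IsSolution

variable {μ μ' : SM} {E : ℝ} {u v u' v' : ℝ → ℝ}

theorem intervalIntegrable (hs : IsSolution μ E u v) (a b : ℝ) :
    IntervalIntegrable v volume a b :=
  (hs.locInt.integrableOn_isCompact isCompact_uIcc).intervalIntegrable

theorem continuous (hs : IsSolution μ E u v) : Continuous u := by
  rw [show u = fun x => u 0 + ∫ t in (0:ℝ)..x, v t from funext hs.u_eq]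
  exact continuous_const.add (intervalIntegral.continuous_primitive hs.intervalIntegrable 0)

theorem u_sub (hs : IsSolution μ E u v) (a t : ℝ) : u t - u a = ∫ s in a..t, v s := by
  rw [hs.u_eq t, hs.u_eq a, ← intervalIntegral.integral_interval_sub_left
    (hs.intervalIntegrable 0 t) (hs.intervalIntegrable 0 a)]
  ring

theorem v_sub (hμ : μ.LocFin) (hs : IsSolution μ E u v) {a t : ℝ} (hat : a ≤ t) :
    v t - v a = μ.integOn u (Ioc a t) - E * ∫ s in a..t, u s := by
  have hu := hs.continuous
  rw [hs.v_eq t, hs.v_eq a, ← intRight_sub_intRight hμ hu hat,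
    ← intervalIntegral.integral_interval_sub_left (hu.intervalIntegrable 0 t)
      (hu.intervalIntegrable 0 a)]
  ring

theorem abs_v_sub_le (hμ : μ.LocFin) (hs : IsSolution μ E u v) {a t S : ℝ} (hat : a ≤ t)
    (hta : t ≤ a + 1) (hS : ∀ r ∈ Icc a t, |u r| ≤ S) :
    |v t - v a| ≤ ((μ.tv (Ioc a t)).toReal + |E|) * S := by
  rw [hs.v_sub hμ hat]
  exact SM.abs_integOn_sub_mul_integral_le hμ hs.continuous E hat hta hS

theorem abs_sub_v_sub_le (hμ : μ.LocFin) (hμ' : μ'.LocFin)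
    (hs : IsSolution μ E u v) (hs' : IsSolution μ' E u' v') {a t G S : ℝ} (hat : a ≤ t)
    (hta : t ≤ a + 1) (hG : ∀ r ∈ Icc a t, |u r| ≤ G) (hS : ∀ r ∈ Icc a t, |u r - u' r| ≤ S) :
    |(v t - v' t) - (v a - v' a)| ≤
      G * (tvDiff μ μ' (Ioc a t)).toReal + ((μ'.tv (Ioc a t)).toReal + |E|) * S := by
  have hu := hs.continuous
  have hu' := hs'.continuous
  have split : (v t - v' t) - (v a - v' a) =
      (μ.integOn u (Ioc a t) - μ'.integOn u (Ioc a t)) +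
        (μ'.integOn (u - u') (Ioc a t) - E * ∫ s in a..t, (u - u') s) := by
    rw [← SM.integOn_sub hμ' hu hu', Pi.sub_def,
      intervalIntegral.integral_sub (hu.intervalIntegrable a t) (hu'.intervalIntegrable a t)]
    linear_combination hs.v_sub hμ hat - hs'.v_sub hμ' hat
  rw [split]
  exact (abs_add_le _ _).trans (add_le_add
    (SM.abs_integOn_sub_integOn_le hμ hμ' hu fun r hr => hG r (Ioc_subset_Icc_self hr))
    (SM.abs_integOn_sub_mul_integral_le hμ' (hu.sub hu') E hat hta hS))

theorem abs_add_abs_le (hμ : μ.LocFin) {M : ℝ≥0∞} (hM : M ≠ ⊤) (hμM : normLoc μ.tv ≤ M)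
    (hs : IsSolution μ E u v) (x : ℝ) :
    |u x| + |v x| ≤ (|u 0| + |v 0|) * exp (growthRate (M.toReal + |E|) * (|x| + 1)) := by
  simpa using abs_add_abs_le_of_increment_bound le_rfl (by positivity) hs.continuous hs.u_sub x
    fun a t hat _ hta S hS => by
      calc |v t - v a| ≤ ((μ.tv (Ioc a t)).toReal + |E|) * S := hs.abs_v_sub_le hμ hat hta hS
        _ ≤ 0 + (M.toReal + |E|) * S := by
          rw [zero_add]
          exact mul_le_mul_of_nonneg_right
            (add_le_add_left (toReal_measure_Ioc_le_of_normLoc_le hM hμM hta) _)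
            ((abs_nonneg _).trans (hS a ⟨le_rfl, hat⟩))

theorem abs_le_of_mem_Ix (hμ : μ.LocFin) {M : ℝ≥0∞} (hM : M ≠ ⊤) (hμM : normLoc μ.tv ≤ M)
    (hs : IsSolution μ E u v) {x s : ℝ} (hsx : s ∈ Ix x) :
    |u s| ≤ (|u 0| + |v 0|) * exp (growthRate (M.toReal + |E|) * (|x| + 1)) := by
  have hmono : exp (growthRate (M.toReal + |E|) * (|s| + 1)) ≤
      exp (growthRate (M.toReal + |E|) * (|x| + 1)) := by
    have := abs_le_abs_of_mem_Ix hsx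
    gcongr
    exact growthRate_nonneg _
  nlinarith [hs.abs_add_abs_le hμ hM hμM s, abs_nonneg (v s), abs_nonneg (u 0), abs_nonneg (v 0)]

theorem abs_sub_add_abs_sub_le (hμ : μ.LocFin) (hμ' : μ'.LocFin) {M : ℝ≥0∞} (hM : M ≠ ⊤)
    (hμ'M : normLoc μ'.tv ≤ M) (hs : IsSolution μ E u v) (hs' : IsSolution μ' E u' v')
    {x G : ℝ} (hG : ∀ s ∈ Ix x, |u s| ≤ G) :
    |u x - u' x| + |v x - v' x| ≤
      (|u 0 - u' 0| + |v 0 - v' 0| + G * (tvDiff μ μ' (Ix x)).toReal) *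
        exp (growthRate (M.toReal + |E|) * (|x| + 1)) := by
  have hG0 : 0 ≤ G := (abs_nonneg _).trans (hG 0 (zero_mem_Ix x))
  have hfin : tvDiff μ μ' (Ix x) ≠ ⊤ := tvDiff_apply_Icc_ne_top hμ hμ' _ _
  refine abs_add_abs_le_of_increment_bound (U := u - u') (V := v - v')
    (ε := G * (tvDiff μ μ' (Ix x)).toReal) (B := M.toReal + |E|) (by positivity) (by positivity)
    (hs.continuous.sub hs'.continuous) (fun a t => ?_) x fun a t hat hsub hta S hS => ?_
  · show u t - u' t - (u a - u' a) = ∫ r in a..t, (v r - v' r)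
    rw [intervalIntegral.integral_sub (hs.intervalIntegrable a t) (hs'.intervalIntegrable a t),
      ← hs.u_sub, ← hs'.u_sub]
    ring
  calc |(v t - v' t) - (v a - v' a)| ≤
      G * (tvDiff μ μ' (Ioc a t)).toReal + ((μ'.tv (Ioc a t)).toReal + |E|) * S :=
        hs.abs_sub_v_sub_le hμ hμ' hs' hat hta (fun r hr => hG r (hsub hr)) hS
    _ ≤ G * (tvDiff μ μ' (Ix x)).toReal + (M.toReal + |E|) * S :=
        add_le_add
          (mul_le_mul_of_nonneg_left
            (ENNReal.toReal_mono hfin (measure_mono (Ioc_subset_Icc_self.trans hsub))) hG0)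
          (mul_le_mul_of_nonneg_right
            (add_le_add_left (toReal_measure_Ioc_le_of_normLoc_le hM hμ'M hta) _)
            ((abs_nonneg _).trans (hS a ⟨le_rfl, hat⟩)))

end IsSolution

theorem sqrt_sq_add_sq_le_abs_add_abs (a b : ℝ) : √(a ^ 2 + b ^ 2) ≤ |a| + |b| :=
  Real.sqrt_le_iff.mpr
    ⟨by positivity, by nlinarith [sq_abs a, sq_abs b, abs_nonneg a, abs_nonneg b]⟩

theorem mul_exp_mul_exp_le {c r₁ r₂ y : ℝ} (hc : 0 ≤ c) (hr : 0 ≤ r₁ + r₂) (hy : 0 ≤ y) :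
    c * exp (r₁ * (y + 1)) * exp (r₂ * (y + 1)) ≤
      (c * exp (r₁ + r₂) + (r₁ + r₂)) * exp ((c * exp (r₁ + r₂) + (r₁ + r₂)) * y) := by
  rw [mul_assoc, ← exp_add, show r₁ * (y + 1) + r₂ * (y + 1) = (r₁ + r₂) * y + (r₁ + r₂) by ring,
    exp_add, mul_comm (exp ((r₁ + r₂) * y)), ← mul_assoc]
  have hcr : c * exp (r₁ + r₂) ≤ c * exp (r₁ + r₂) + (r₁ + r₂) := le_add_of_nonneg_right hr
  have hrc : r₁ + r₂ ≤ c * exp (r₁ + r₂) + (r₁ + r₂) := le_add_of_nonneg_left (by positivity)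
  gcongr

theorem gordon_approximation_estimate_general (μ : SM) (hloc : μ.LocFin)
    (hub : UnifLocBounded μ.tv)
    (μs : ℕ → SM)
    (hmloc : ∀ m, (μs m).LocFin)
    (hsup : ∃ M : ℝ≥0∞, M < ⊤ ∧ ∀ m, normLoc (μs m).tv ≤ M)
    (E : ℝ) (u v : ℝ → ℝ) (hs : IsSolution μ E u v)
    (um vm : ℕ → ℝ → ℝ) (hsm : ∀ m, IsSolution (μs m) E (um m) (vm m))
    (h0u : ∀ m, um m 0 = u 0) (h0v : ∀ m, vm m 0 = v 0) :
    ∃ C : ℝ, 0 ≤ C ∧ ∀ m : ℕ, ∀ x : ℝ,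
      Real.sqrt ((u x - um m x) ^ 2 + (v x - vm m x) ^ 2) ≤
        C * Real.exp (C * |x|) * ((tvDiff μ (μs m)) (Ix x)).toReal := by
  obtain ⟨M, hM, hμsM⟩ := hsup
  set r₁ := growthRate ((normLoc μ.tv).toReal + |E|)
  set r₂ := growthRate (M.toReal + |E|)
  set N := |u 0| + |v 0|
  have hr : 0 ≤ r₁ + r₂ := add_nonneg (growthRate_nonneg _) (growthRate_nonneg _)
  refine ⟨N * exp (r₁ + r₂) + (r₁ + r₂), by positivity, fun m x => ?_⟩
  have hdiff := hs.abs_sub_add_abs_sub_le hloc (hmloc m) hM.ne (hμsM m) (hsm m)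
    fun s hsx => hs.abs_le_of_mem_Ix hloc hub.ne le_rfl (x := x) hsx
  rw [h0u, h0v, sub_self, sub_self, abs_zero, zero_add, zero_add] at hdiff
  calc √((u x - um m x) ^ 2 + (v x - vm m x) ^ 2) ≤ |u x - um m x| + |v x - vm m x| :=
        sqrt_sq_add_sq_le_abs_add_abs _ _
    _ ≤ N * exp (r₁ * (|x| + 1)) * exp (r₂ * (|x| + 1)) * (tvDiff μ (μs m) (Ix x)).toReal := by
        linarith
    _ ≤ (N * exp (r₁ + r₂) + (r₁ + r₂)) * exp ((N * exp (r₁ + r₂) + (r₁ + r₂)) * |x|) *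
          (tvDiff μ (μs m) (Ix x)).toReal :=
        mul_le_mul_of_nonneg_right (mul_exp_mul_exp_le (by positivity) hr (abs_nonneg x))
          ENNReal.toReal_nonneg

/-- Let `μ` be a Gordon measure with `p_m`-periodic
approximants `μ^m`, and let `(u,v)`, `(u_m,v_m)` be solutions for `μ`, `μ^m`
with the same normalized initial data at `0`. Then there is `C ≥ 0`,
independent of `m`, with
`‖(u - u_m, v - v_m)(x)‖ ≤ C e^{C|x|} |μ - μ^m|(I_x)` for all `x`. -/
theorem gordon_approximation_estimate (μ : SM) (hloc : μ.LocFin)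
    (hub : UnifLocBounded μ.tv)
    (μs : ℕ → SM) (p : ℕ → ℝ)
    (hmloc : ∀ m, (μs m).LocFin) (hp : ∀ m, 0 < p m)
    (hper : ∀ m, (μs m).IsPeriodic (p m))
    (hmub : ∀ m, UnifLocBounded (μs m).tv)
    (hsup : ∃ M : ℝ≥0∞, M < ⊤ ∧ ∀ m, normLoc (μs m).tv ≤ M)
    (hptop : Tendsto p atTop atTop)
    (happ : ∀ C : ℝ, Tendsto (fun m => Real.exp (C * p m) *
        ((tvDiff μ (μs m)) (Set.Icc (-(p m)) (2 * p m))).toReal) atTop (nhds 0))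
    (E : ℝ) (u v : ℝ → ℝ) (hs : IsSolution μ E u v)
    (um vm : ℕ → ℝ → ℝ) (hsm : ∀ m, IsSolution (μs m) E (um m) (vm m))
    (h0u : ∀ m, um m 0 = u 0) (h0v : ∀ m, vm m 0 = v 0)
    (hnorm : (u 0) ^ 2 + (v 0) ^ 2 = 1) :
    ∃ C : ℝ, 0 ≤ C ∧ ∀ m : ℕ, ∀ x : ℝ,
      Real.sqrt ((u x - um m x) ^ 2 + (v x - vm m x) ^ 2) ≤
        C * Real.exp (C * |x|) * ((tvDiff μ (μs m)) (Ix x)).toReal :=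
  gordon_approximation_estimate_general μ hloc hub μs hmloc hsup E u v hs um vm hsm h0u h0v
end

section
/- Let v ∈ L²(ℝ) be a function of locally bounded variation such that for every r > 0, |v(x) − v(x+r)| → 0 as |x| → ∞. Then |v(x)| → 0 as |x| → ∞. -/
open MeasureTheory Filter Set Real
open scoped ENNReal

/-!
Truncating by `ψ a = min (a ^ 2) 1` gives `ψ a ≤ 2 ψ (a - b) + 2 b ^ 2`; averaging over
`b = v (x + r)`, `r ∈ (0, 1]`, yields
`ψ (v x) ≤ 2 ∫₀¹ ψ (v x - v (x + r)) dr + 2 ∫ₓˣ⁺¹ v ^ 2`.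
The first term tends to zero by dominated convergence, the truncation supplying the bound `1`
and the hypothesis the pointwise limit; the second is the mass of the integrable `v ^ 2` on a
window escaping to infinity.
-/

open Topology

instance Real.isCountablyGenerated_cocompact : (cocompact ℝ).IsCountablyGenerated := by
  rw [cocompact_eq_atBot_atTop]
  infer_instance

lemma tendsto_setIntegral_comp_add_cocompact {E : Type*} [NormedAddCommGroup E] [NormedSpace ℝ E]
    {f : ℝ → E} (hf : Integrable f) {s : Set ℝ} (hs : Bornology.IsBounded s)
    (hsm : MeasurableSet s) :
    Tendsto (fun x => ∫ r in s, f (x + r)) (cocompact ℝ) (𝓝 0) := by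
  have htrans : ∀ x, ∫ r in s, f (x + r) = ∫ y, ((· - x) ⁻¹' s).indicator f y := by
    intro x
    rw [← integral_indicator hsm, ← integral_add_left_eq_self (((· - x) ⁻¹' s).indicator f) x]
    congr 1 with r
    by_cases hr : r ∈ s <;> simp [indicator, hr]
  simp_rw [htrans]
  rw [← integral_zero ℝ E]
  refine tendsto_integral_filter_of_dominated_convergence (fun y => ‖f y‖) ?_ ?_ hf.norm ?_
  · exact Eventually.of_forall fun x =>
      hf.aestronglyMeasurable.indicator (measurableSet_preimage (by fun_prop) hsm)
  · exact Eventually.of_forall fun x => Eventually.of_forall fun y => norm_indicator_le_norm_self _ _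
  · refine Eventually.of_forall fun y => tendsto_const_nhds.congr' ?_
    have hbdd : Bornology.IsBounded ((y - ·) ⁻¹' s) := by
      convert hs.neg.vadd y using 1
      ext x
      simp only [mem_preimage, mem_vadd_set, Set.mem_neg, vadd_eq_add]
      exact ⟨fun hx => ⟨x - y, by simpa using hx, by ring⟩, by rintro ⟨t, ht, rfl⟩; simpa using ht⟩
    rw [← Metric.cobounded_eq_cocompact]
    filter_upwards [Bornology.isBounded_def.mp hbdd] with x hx
    exact (indicator_of_notMem (show y ∉ (· - x) ⁻¹' s from hx) f).symm

lemma min_sq_one_le (a b : ℝ) : min (a ^ 2) 1 ≤ 2 * min ((a - b) ^ 2) 1 + 2 * b ^ 2 := by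
  rcases le_total ((a - b) ^ 2) 1 with h | h
  · rw [min_eq_left h]
    nlinarith [min_le_left (a ^ 2) 1, sq_nonneg (a - 2 * b)]
  · rw [min_eq_right h]
    nlinarith [min_le_right (a ^ 2) 1, sq_nonneg b]

lemma norm_min_sq_one_le (a : ℝ) : ‖min (a ^ 2) 1‖ ≤ 1 := by
  rw [Real.norm_of_nonneg (le_min (sq_nonneg a) zero_le_one)]
  exact min_le_right _ _

section

variable {v : ℝ → ℝ} (hv : AEStronglyMeasurable v)
include hv

lemma integrableOn_min_sq_sub_comp_add (x : ℝ) {s : Set ℝ} (hs : volume s ≠ ⊤) :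
    IntegrableOn (fun r => min ((v x - v (x + r)) ^ 2) 1) s := by
  have hvx : AEStronglyMeasurable (fun r => v (x + r)) :=
    hv.comp_quasiMeasurePreserving (quasiMeasurePreserving_add_left volume x)
  exact Measure.integrableOn_of_bounded hs
    (((aestronglyMeasurable_const.sub hvx).pow 2).inf aestronglyMeasurable_const)
    (ae_of_all _ fun r => norm_min_sq_one_le _)

lemma tendsto_setIntegral_min_sq_sub_comp_add {s : Set ℝ} (hsm : MeasurableSet s)
    (hs : volume s ≠ ⊤) (hs0 : s ⊆ Ioi 0)
    (h : ∀ r, 0 < r → Tendsto (fun x => |v x - v (x + r)|) (cocompact ℝ) (𝓝 0)) :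
    Tendsto (fun x => ∫ r in s, min ((v x - v (x + r)) ^ 2) 1) (cocompact ℝ) (𝓝 0) := by
  have : IsFiniteMeasure (volume.restrict s) := isFiniteMeasure_restrict.mpr hs
  rw [← integral_zero ℝ ℝ]
  refine tendsto_integral_filter_of_dominated_convergence (fun _ => 1)
    (Eventually.of_forall fun x => (integrableOn_min_sq_sub_comp_add hv x hs).aestronglyMeasurable)
    (Eventually.of_forall fun x => ae_of_all _ fun r => norm_min_sq_one_le _)
    (integrable_const 1) ?_
  filter_upwards [ae_restrict_mem hsm] with r hr
  simpa only [sq_abs, ne_eq, OfNat.ofNat_ne_zero, not_false_eq_true, zero_pow, zero_le_one,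
    min_eq_left] using ((h r (hs0 hr)).pow 2).min (tendsto_const_nhds (x := (1 : ℝ)))

lemma min_sq_one_le_setIntegral (hsq : Integrable (fun y => v y ^ 2)) (x : ℝ) :
    min (v x ^ 2) 1 ≤ 2 * (∫ r in Ioc 0 1, min ((v x - v (x + r)) ^ 2) 1)
      + 2 * ∫ r in Ioc 0 1, v (x + r) ^ 2 := by
  have hA := (integrableOn_min_sq_sub_comp_add hv x (s := Ioc 0 1) (by simp)).const_mul 2
  have hB := ((hsq.comp_add_left x).integrableOn (s := Ioc 0 1)).const_mul 2
  calc min (v x ^ 2) 1 = ∫ _ in Ioc (0 : ℝ) 1, min (v x ^ 2) 1 := by simp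
    _ ≤ ∫ r in Ioc 0 1, (2 * min ((v x - v (x + r)) ^ 2) 1 + 2 * v (x + r) ^ 2) :=
      setIntegral_mono (integrableOn_const (by simp)) (by exact hA.add hB) fun r => min_sq_one_le _ _
    _ = _ := by rw [integral_add hA hB, integral_const_mul, integral_const_mul]

end

lemma tendsto_abs_of_tendsto_min_sq_one {α : Type*} {l : Filter α} {f : α → ℝ}
    (hf : Tendsto (fun x => min (f x ^ 2) 1) l (𝓝 0)) : Tendsto (fun x => |f x|) l (𝓝 0) := by
  have hsq : Tendsto (fun x => f x ^ 2) l (𝓝 0) := by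
    refine hf.congr' ?_
    filter_upwards [hf.eventually_lt_const one_pos] with x hx
    exact min_eq_left (min_lt_iff.mp hx |>.resolve_right (lt_irrefl 1)).le
  simpa [Real.sqrt_sq_eq_abs] using hsq.sqrt

theorem tendsto_zero_of_L2_BVloc_general (v : ℝ → ℝ) (hL2 : MemLp v 2 volume)
    (h : ∀ r : ℝ, 0 < r →
      Tendsto (fun x => |v x - v (x + r)|) (Filter.cocompact ℝ) (nhds 0)) :
    Tendsto (fun x => |v x|) (Filter.cocompact ℝ) (nhds 0) := by
  have hv := hL2.aestronglyMeasurable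
  have hdiff := tendsto_setIntegral_min_sq_sub_comp_add hv (s := Ioc 0 1) measurableSet_Ioc
    (by simp) Ioc_subset_Ioi_self h
  have htail := tendsto_setIntegral_comp_add_cocompact hL2.integrable_sq
    (Metric.isBounded_Ioc (0 : ℝ) 1) measurableSet_Ioc
  refine tendsto_abs_of_tendsto_min_sq_one <| squeeze_zero
    (fun x => le_min (sq_nonneg _) zero_le_one) (min_sq_one_le_setIntegral hv hL2.integrable_sq) ?_
  simpa using (hdiff.const_mul 2).add (htail.const_mul 2)

/-- If `v ∈ L²(ℝ)` has locally bounded variation and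
`|v(x) - v(x+r)| → 0` as `|x| → ∞` for every `r > 0`, then `|v(x)| → 0` as
`|x| → ∞`. -/
theorem tendsto_zero_of_L2_BVloc (v : ℝ → ℝ) (hL2 : MemLp v 2 volume)
    (hBV : LocallyBoundedVariationOn v Set.univ)
    (h : ∀ r : ℝ, 0 < r →
      Tendsto (fun x => |v x - v (x + r)|) (Filter.cocompact ℝ) (nhds 0)) :
    Tendsto (fun x => |v x|) (Filter.cocompact ℝ) (nhds 0) :=
  tendsto_zero_of_L2_BVloc_general v hL2 h
end
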